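/- (Asymptotic linearity of the logit in the sample size) Let a > 0 and c ∈ ℝ. Then logit( Φ(a·√n − c) ) / n converges to a²/2 as n → ∞ (n a real variable). -/

import Mathlib

open Real Filter MeasureTheory

/-- The standard normal density `φ(t) = (2π)^{-1/2} exp(-t²/2)`. -/
noncomputable def stdNormalPDF (t : ℝ) : ℝ :=
  (Real.sqrt (2 * Real.pi))⁻¹ * Real.exp (-(t ^ 2) / 2)

/-- The standard normal CDF `Φ(x) = ∫_{-∞}^x φ(t) dt`. -/
noncomputable def stdNormalCDF (x : ℝ) : ℝ :=
  ∫ t in Set.Iic x, stdNormalPDF t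

/-- `logit(x) = log(x) − log(1−x)`. -/
noncomputable def logit (x : ℝ) : ℝ :=
  Real.log x - Real.log (1 - x)

/-- The upper tail of the standard normal distribution. -/
noncomputable def stdNormalTail (x : ℝ) : ℝ :=
  ∫ t in Set.Ioi x, stdNormalPDF t

lemma stdNormalPDF_nonneg (t : ℝ) : 0 ≤ stdNormalPDF t :=
  mul_nonneg (inv_nonneg.2 (Real.sqrt_nonneg _)) (Real.exp_nonneg _)

lemma stdNormalPDF_pos (t : ℝ) : 0 < stdNormalPDF t :=
  mul_pos (inv_pos.2 (Real.sqrt_pos.2 (by positivity))) (Real.exp_pos _)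

lemma stdNormalPDF_eq : stdNormalPDF =
    fun t => (Real.sqrt (2 * Real.pi))⁻¹ * Real.exp (-(1/2) * t ^ 2) := by
  funext t
  rw [stdNormalPDF, show -(t ^ 2) / 2 = -(1/2) * t ^ 2 by ring]

lemma integrable_stdNormalPDF : Integrable stdNormalPDF := by
  rw [stdNormalPDF_eq]
  exact (integrable_exp_neg_mul_sq (by norm_num : (0:ℝ) < 1/2)).const_mul _

lemma integral_stdNormalPDF : ∫ t, stdNormalPDF t = 1 := by
  rw [stdNormalPDF_eq, integral_const_mul, integral_gaussian]
  rw [show Real.pi / (1/2) = 2 * Real.pi by ring]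
  exact inv_mul_cancel₀ (ne_of_gt (Real.sqrt_pos.2 (by positivity)))

lemma cdf_add_tail (x : ℝ) : stdNormalCDF x + stdNormalTail x = 1 := by
  rw [stdNormalCDF, stdNormalTail,
    intervalIntegral.integral_Iic_add_Ioi integrable_stdNormalPDF.integrableOn
      integrable_stdNormalPDF.integrableOn, integral_stdNormalPDF]

lemma integral_t_exp (x : ℝ) :
    ∫ t in Set.Ioi x, t * Real.exp (-(t ^ 2) / 2) = Real.exp (-(x ^ 2) / 2) := by
  have hfun : (fun t : ℝ => t * Real.exp (-(t ^ 2) / 2)) =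
      fun t : ℝ => t * Real.exp (-(1/2) * t ^ 2) := by
    funext t; rw [show -(t ^ 2) / 2 = -(1/2) * t ^ 2 by ring]
  have hint : IntegrableOn (fun t : ℝ => t * Real.exp (-(t ^ 2) / 2)) (Set.Ioi x) := by
    rw [hfun]
    exact (integrable_mul_exp_neg_mul_sq (by norm_num : (0:ℝ) < 1/2)).integrableOn
  have hderiv : ∀ t ∈ Set.Ici x, HasDerivAt (fun t : ℝ => -Real.exp (-(t ^ 2) / 2))
      (t * Real.exp (-(t ^ 2) / 2)) t := by
    intro t _
    have h1 : HasDerivAt (fun t : ℝ => -(t ^ 2) / 2) (-t) t := by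
      have h := ((hasDerivAt_pow 2 t).neg.div_const 2)
      refine h.congr_deriv ?_
      norm_num
      ring
    have h2 := (h1.exp).neg
    refine h2.congr_deriv ?_
    ring
  have htend : Tendsto (fun t : ℝ => -Real.exp (-(t ^ 2) / 2)) atTop (nhds 0) := by
    rw [show (0:ℝ) = -0 by ring]
    apply Tendsto.neg
    apply Real.tendsto_exp_atBot.comp
    apply Tendsto.atBot_div_const (by norm_num : (0:ℝ) < 2)
    apply tendsto_neg_atTop_atBot.comp
    exact tendsto_pow_atTop two_ne_zero
  rw [integral_Ioi_of_hasDerivAt_of_tendsto' hderiv hint htend]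
  ring

lemma tail_le (x : ℝ) (hx : 0 < x) : stdNormalTail x ≤ stdNormalPDF x / x := by
  have key : stdNormalTail x ≤
      ∫ t in Set.Ioi x, (x⁻¹ * (Real.sqrt (2 * Real.pi))⁻¹) * (t * Real.exp (-(t ^ 2) / 2)) := by
    apply setIntegral_mono_on integrable_stdNormalPDF.integrableOn
    · exact (((integrable_mul_exp_neg_mul_sq (by norm_num : (0:ℝ) < 1/2)).congr
        (by rw [show (fun t : ℝ => t * Real.exp (-(t^2)/2)) =
          fun t : ℝ => t * Real.exp (-(1/2) * t^2) from
            funext fun t => by rw [show -(t ^ 2) / 2 = -(1/2) * t ^ 2 by ring]])).const_mul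
        _).integrableOn
    · exact measurableSet_Ioi
    · intro t ht
      have h1 : (1:ℝ) ≤ t / x := (one_le_div hx).2 (le_of_lt ht)
      have h2 : stdNormalPDF t * 1 ≤ stdNormalPDF t * (t / x) :=
        mul_le_mul_of_nonneg_left h1 (stdNormalPDF_nonneg t)
      rw [mul_one] at h2
      refine h2.trans_eq ?_
      rw [stdNormalPDF]
      field_simp
  rw [integral_const_mul, integral_t_exp] at key
  refine key.trans_eq ?_
  rw [stdNormalPDF]
  field_simp

lemma le_tail (x : ℝ) (hx : 0 ≤ x) : stdNormalPDF (x + 1) ≤ stdNormalTail x := by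
  have h1 : stdNormalPDF (x + 1) ≤ ∫ t in Set.Ioc x (x + 1), stdNormalPDF t := by
    have hconst : ∫ t in Set.Ioc x (x + 1), (fun _ : ℝ => stdNormalPDF (x + 1)) t
        = stdNormalPDF (x + 1) := by
      rw [setIntegral_const]
      simp [Real.volume_Ioc]
    rw [← hconst]
    apply setIntegral_mono_on
    · exact integrableOn_const measure_Ioc_lt_top.ne
    · exact integrable_stdNormalPDF.integrableOn
    · exact measurableSet_Ioc
    · intro t ht
      rw [stdNormalPDF, stdNormalPDF]
      apply mul_le_mul_of_nonneg_left _ (inv_nonneg.2 (Real.sqrt_nonneg _))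
      apply Real.exp_le_exp.2
      have h1 := ht.1
      have h2 := ht.2
      nlinarith
  have h2 : ∫ t in Set.Ioc x (x + 1), stdNormalPDF t ≤ stdNormalTail x := by
    apply setIntegral_mono_set integrable_stdNormalPDF.integrableOn
    · exact Eventually.of_forall fun t => stdNormalPDF_nonneg t
    · exact HasSubset.Subset.eventuallyLE Set.Ioc_subset_Ioi_self
  linarith

lemma two_le_sqrt_two_pi : (2:ℝ) ≤ Real.sqrt (2 * Real.pi) := by
  have h1 := Real.sq_sqrt (show (0:ℝ) ≤ 2 * Real.pi by positivity)
  have h2 := Real.sqrt_nonneg (2 * Real.pi)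
  nlinarith [Real.pi_gt_three]

lemma tail_pos (x : ℝ) (hx : 0 ≤ x) : 0 < stdNormalTail x :=
  lt_of_lt_of_le (stdNormalPDF_pos (x + 1)) (le_tail x hx)

lemma tail_le_half (x : ℝ) (hx : 1 ≤ x) : stdNormalTail x ≤ 1 / 2 := by
  have h1 : stdNormalTail x ≤ stdNormalPDF x / x := tail_le x (by linarith)
  have h2 : stdNormalPDF x / x ≤ stdNormalPDF x :=
    div_le_self (stdNormalPDF_nonneg x) hx
  have h3 : stdNormalPDF x ≤ (Real.sqrt (2 * Real.pi))⁻¹ := by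
    rw [stdNormalPDF]
    nth_rewrite 2 [show (Real.sqrt (2 * Real.pi))⁻¹ = (Real.sqrt (2 * Real.pi))⁻¹ * 1 by ring]
    apply mul_le_mul_of_nonneg_left _ (inv_nonneg.2 (Real.sqrt_nonneg _))
    rw [Real.exp_le_one_iff]
    nlinarith
  have h4 : (Real.sqrt (2 * Real.pi))⁻¹ ≤ 1 / 2 := by
    rw [show (1:ℝ)/2 = 2⁻¹ by norm_num]
    exact inv_anti₀ (by norm_num) two_le_sqrt_two_pi
  linarith

lemma log_stdNormalPDF (x : ℝ) : Real.log (stdNormalPDF x) =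
    -Real.log (Real.sqrt (2 * Real.pi)) + (-(x ^ 2) / 2) := by
  rw [stdNormalPDF, Real.log_mul (inv_ne_zero (ne_of_gt (Real.sqrt_pos.2 (by positivity))))
    (Real.exp_ne_zero _), Real.log_inv, Real.log_exp]

/-- Two-sided bounds for `logit (Φ x)` when `x ≥ 1`. -/
lemma logit_bounds (x : ℝ) (hx : 1 ≤ x) :
    (Real.log (1/2) + Real.log (Real.sqrt (2 * Real.pi)) + x ^ 2 / 2 + Real.log x
      ≤ logit (stdNormalCDF x)) ∧
    (logit (stdNormalCDF x) ≤ Real.log (Real.sqrt (2 * Real.pi)) + (x + 1) ^ 2 / 2) := by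
  have hx0 : (0:ℝ) ≤ x := by linarith
  have hT := cdf_add_tail x
  have hone : 1 - stdNormalCDF x = stdNormalTail x := by linarith
  have hTpos : 0 < stdNormalTail x := tail_pos x hx0
  have hThalf : stdNormalTail x ≤ 1 / 2 := tail_le_half x hx
  have hCDFhalf : 1 / 2 ≤ stdNormalCDF x := by linarith
  have hCDFone : stdNormalCDF x ≤ 1 := by
    have := tail_pos x hx0; linarith
  rw [logit, hone]
  constructor
  · -- lower bound
    have hlogC : Real.log (1/2) ≤ Real.log (stdNormalCDF x) :=
      Real.log_le_log (by norm_num) hCDFhalf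
    have hlogT : Real.log (stdNormalTail x) ≤ Real.log (stdNormalPDF x / x) :=
      Real.log_le_log hTpos (tail_le x (by linarith))
    have heq : Real.log (stdNormalPDF x / x) =
        -Real.log (Real.sqrt (2 * Real.pi)) + (-(x ^ 2) / 2) - Real.log x := by
      rw [Real.log_div (ne_of_gt (stdNormalPDF_pos x)) (by linarith), log_stdNormalPDF]
    rw [heq] at hlogT
    linarith
  · -- upper bound
    have hlogC : Real.log (stdNormalCDF x) ≤ 0 := Real.log_nonpos (by linarith) hCDFone
    have hlogT : Real.log (stdNormalPDF (x + 1)) ≤ Real.log (stdNormalTail x) :=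
      Real.log_le_log (stdNormalPDF_pos _) (le_tail x hx0)
    rw [log_stdNormalPDF] at hlogT
    linarith

lemma tendsto_sqrt_atTop' : Tendsto Real.sqrt atTop atTop := by
  apply tendsto_atTop_atTop.2
  intro b
  refine ⟨(max b 0) ^ 2, fun x hx => ?_⟩
  calc b ≤ max b 0 := le_max_left _ _
    _ = Real.sqrt ((max b 0) ^ 2) := (Real.sqrt_sq (le_max_right _ _)).symm
    _ ≤ Real.sqrt x := Real.sqrt_le_sqrt hx

lemma tendsto_sq_div (a c : ℝ) (ha : 0 < a) :
    Tendsto (fun n : ℝ => (a * Real.sqrt n - c) ^ 2 / n) atTop (nhds (a ^ 2)) := by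
  have h0 : Tendsto (fun n : ℝ => c / Real.sqrt n) atTop (nhds 0) :=
    Tendsto.div_atTop tendsto_const_nhds tendsto_sqrt_atTop'
  have h1 : Tendsto (fun n : ℝ => (a - c / Real.sqrt n) ^ 2) atTop (nhds (a ^ 2)) := by
    have := (tendsto_const_nhds (x := a) (f := atTop (α := ℝ))).sub h0
    rw [sub_zero] at this
    exact this.pow 2
  apply h1.congr'
  filter_upwards [eventually_gt_atTop 0] with n hn
  have hs : Real.sqrt n > 0 := Real.sqrt_pos.2 hn
  have hsq : Real.sqrt n ^ 2 = n := Real.sq_sqrt hn.le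
  field_simp
  rw [hsq]; ring

lemma tendsto_log_term (a c : ℝ) (ha : 0 < a) :
    Tendsto (fun n : ℝ => Real.log (a * Real.sqrt n - c) / n) atTop (nhds 0) := by
  have hev : ∀ᶠ n : ℝ in atTop, 1 ≤ a * Real.sqrt n - c := by
    have := (tendsto_sqrt_atTop'.const_mul_atTop ha).eventually_ge_atTop (c + 1)
    filter_upwards [this] with n hn; linarith
  apply squeeze_zero' (g := fun n : ℝ => a / Real.sqrt n + |c| / n)
  · filter_upwards [hev, eventually_ge_atTop 1] with n h1 hn
    have : (0:ℝ) ≤ Real.log (a * Real.sqrt n - c) := Real.log_nonneg h1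
    positivity
  · filter_upwards [hev, eventually_ge_atTop 1] with n h1 hn
    have hn0 : (0:ℝ) < n := by linarith
    have hlog : Real.log (a * Real.sqrt n - c) ≤ a * Real.sqrt n - c - 1 :=
      Real.log_le_sub_one_of_pos (by linarith)
    have hb : Real.log (a * Real.sqrt n - c) ≤ a * Real.sqrt n + |c| := by
      have := neg_abs_le c; linarith
    calc Real.log (a * Real.sqrt n - c) / n ≤ (a * Real.sqrt n + |c|) / n :=
          (div_le_div_iff_of_pos_right hn0).2 hb
      _ = a / Real.sqrt n + |c| / n := by
          have hs : Real.sqrt n > 0 := Real.sqrt_pos.2 hn0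
          have hsq : Real.sqrt n ^ 2 = n := Real.sq_sqrt hn0.le
          have key : a * Real.sqrt n / n = a / Real.sqrt n := by
            rw [div_eq_div_iff (ne_of_gt hn0) (ne_of_gt hs)]
            linear_combination a * hsq
          rw [add_div, key]
  · have ha1 : Tendsto (fun n : ℝ => a / Real.sqrt n) atTop (nhds 0) :=
      Tendsto.div_atTop tendsto_const_nhds tendsto_sqrt_atTop'
    have ha2 : Tendsto (fun n : ℝ => |c| / n) atTop (nhds 0) :=
      Tendsto.div_atTop tendsto_const_nhds tendsto_id
    simpa using ha1.add ha2

/-- (Asymptotic linearity of the logit in the sample size) Let `a > 0` and `c ∈ ℝ`.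
Then `logit(Φ(a·√n − c))/n → a²/2` as `n → ∞`. -/
theorem tendsto_logit_div_n_pos (a c : ℝ) (ha : 0 < a) :
    Tendsto (fun n : ℝ => logit (stdNormalCDF (a * Real.sqrt n - c)) / n) atTop
      (nhds (a ^ 2 / 2)) := by
  set L := Real.log (Real.sqrt (2 * Real.pi)) with hL
  -- lower bound sequence
  have hlo : Tendsto (fun n : ℝ =>
      (Real.log (1/2) + L) / n + ((a * Real.sqrt n - c) ^ 2 / n) / 2
        + Real.log (a * Real.sqrt n - c) / n) atTop (nhds (a ^ 2 / 2)) := by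
    have h1 : Tendsto (fun n : ℝ => (Real.log (1/2) + L) / n) atTop (nhds 0) :=
      Tendsto.div_atTop tendsto_const_nhds tendsto_id
    have h2 := (tendsto_sq_div a c ha).div_const 2
    have h3 := tendsto_log_term a c ha
    have := (h1.add h2).add h3
    simpa using this
  -- upper bound sequence
  have hhi : Tendsto (fun n : ℝ =>
      L / n + ((a * Real.sqrt n - (c - 1)) ^ 2 / n) / 2) atTop (nhds (a ^ 2 / 2)) := by
    have h1 : Tendsto (fun n : ℝ => L / n) atTop (nhds 0) :=
      Tendsto.div_atTop tendsto_const_nhds tendsto_id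
    have h2 := (tendsto_sq_div a (c - 1) ha).div_const 2
    have := h1.add h2
    simpa using this
  have hev : ∀ᶠ n : ℝ in atTop, 1 ≤ a * Real.sqrt n - c := by
    have := (tendsto_sqrt_atTop'.const_mul_atTop ha).eventually_ge_atTop (c + 1)
    filter_upwards [this] with n hn; linarith
  apply tendsto_of_tendsto_of_tendsto_of_le_of_le' hlo hhi
  · filter_upwards [hev, eventually_gt_atTop 0] with n h1 hn
    set x := a * Real.sqrt n - c with hxdef
    have hb := (logit_bounds x h1).1
    have : (Real.log (1/2) + L + x ^ 2 / 2 + Real.log x) / n ≤ logit (stdNormalCDF x) / n :=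
      (div_le_div_iff_of_pos_right hn).2 hb
    calc (Real.log (1/2) + L) / n + (x ^ 2 / n) / 2 + Real.log x / n
        = (Real.log (1/2) + L + x ^ 2 / 2 + Real.log x) / n := by ring
      _ ≤ logit (stdNormalCDF x) / n := this
  · filter_upwards [hev, eventually_gt_atTop 0] with n h1 hn
    set x := a * Real.sqrt n - c with hxdef
    have hb := (logit_bounds x h1).2
    have h2 : logit (stdNormalCDF x) / n ≤ (L + (x + 1) ^ 2 / 2) / n :=
      (div_le_div_iff_of_pos_right hn).2 hb
    have heq : a * Real.sqrt n - (c - 1) = x + 1 := by rw [hxdef]; ring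
    calc logit (stdNormalCDF x) / n ≤ (L + (x + 1) ^ 2 / 2) / n := h2
      _ = L / n + ((a * Real.sqrt n - (c - 1)) ^ 2 / n) / 2 := by rw [heq]; ring
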